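/- arXiv:2605.20693 — 4 statements merged into one kernel-verified Lean document; each statement's English description precedes it below -/
import Mathlib

section
/- Under the symmetric equal-noise annotation model with latent prevalence π ∈ (0,1) and noise rate η ∈ [0, 1/2), one has p_e < 1, and Cohen's κ between the two annotators admits the closed form κ = (1 − 2η)² π(1 − π) / ( η(1 − η) + (1 − 2η)² π(1 − π) ). -/
open MeasureTheory

/-- Under the symmetric equal-noise annotation model with `π ∈ (0,1)` and `η ∈ [0,1/2)`,
one has `p_e < 1`, and Cohen's `κ = (p_o - p_e)/(1 - p_e)` admits the closed form
`κ = (1-2η)² π(1-π) / (η(1-η) + (1-2η)² π(1-π))`. -/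
theorem kappa_closed_form
    {Ω : Type*} [MeasurableSpace Ω] (P : Measure Ω) [IsProbabilityMeasure P]
    (π η : ℝ) (hπ0 : 0 ≤ π) (hπ1 : π ≤ 1) (hη0 : 0 ≤ η) (hη1 : η ≤ 1)
    (Z εA εB A B : Ω → Bool)
    (hZ : Measurable Z) (hεA : Measurable εA) (hεB : Measurable εB)
    (hjoint : ∀ z a b : Bool,
      (P {ω | Z ω = z ∧ εA ω = a ∧ εB ω = b}).toReal =
        (cond z π (1 - π)) * (cond a η (1 - η)) * (cond b η (1 - η)))
    (hA : ∀ ω, A ω = xor (Z ω) (εA ω))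
    (hB : ∀ ω, B ω = xor (Z ω) (εB ω))
    (hπpos : 0 < π) (hπlt : π < 1) (hηlt : η < 1 / 2)
    (po pe : ℝ)
    (hpo : po = (P {ω | A ω = B ω}).toReal)
    (hpe : pe = (P {ω | A ω = true}).toReal * (P {ω | B ω = true}).toReal
        + (P {ω | A ω = false}).toReal * (P {ω | B ω = false}).toReal) :
    pe < 1 ∧
    (po - pe) / (1 - pe) =
      (1 - 2 * η) ^ 2 * (π * (1 - π)) /
        (η * (1 - η) + (1 - 2 * η) ^ 2 * (π * (1 - π))) := by
  -- key lemma: probability of any event determined by (Z, εA, εB)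
  have key : ∀ f : Bool → Bool → Bool → Bool,
      (P {ω | f (Z ω) (εA ω) (εB ω) = true}).toReal =
        ∑ t : Bool × Bool × Bool,
          (if f t.1 t.2.1 t.2.2 = true then
            (cond t.1 π (1 - π)) * (cond t.2.1 η (1 - η)) * (cond t.2.2 η (1 - η)) else 0) := by
    intro f
    set T : Bool × Bool × Bool → Set Ω := fun t =>
      if f t.1 t.2.1 t.2.2 = true then
        {ω | Z ω = t.1 ∧ εA ω = t.2.1 ∧ εB ω = t.2.2} else ∅ with hT
    have hmeas : ∀ t, MeasurableSet (T t) := by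
      intro t
      by_cases h : f t.1 t.2.1 t.2.2 = true
      · simp only [hT, h, if_true]
        have : {ω | Z ω = t.1 ∧ εA ω = t.2.1 ∧ εB ω = t.2.2} =
            Z ⁻¹' {t.1} ∩ (εA ⁻¹' {t.2.1} ∩ εB ⁻¹' {t.2.2}) := by
          ext ω; simp [Set.mem_inter_iff]
        rw [this]
        exact (hZ (measurableSet_singleton _)).inter
          ((hεA (measurableSet_singleton _)).inter (hεB (measurableSet_singleton _)))
      · simp [hT, h]
    have hdisj : Pairwise (Function.onFun Disjoint T) := by
      intro s t hst
      by_cases hs : f s.1 s.2.1 s.2.2 = true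
      · by_cases ht : f t.1 t.2.1 t.2.2 = true
        · simp only [Function.onFun, hT, hs, ht, if_true]
          rw [Set.disjoint_left]
          intro ω hω hω'
          apply hst
          simp only [Set.mem_setOf_eq] at hω hω'
          ext <;> simp [← hω.1, ← hω.2.1, ← hω.2.2, hω'.1, hω'.2.1, hω'.2.2]
        · simp [Function.onFun, hT, ht]
      · simp [Function.onFun, hT, hs]
    have hunion : {ω | f (Z ω) (εA ω) (εB ω) = true} = ⋃ t, T t := by
      ext ω
      simp only [Set.mem_iUnion, Set.mem_setOf_eq, hT]
      constructor
      · intro h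
        exact ⟨(Z ω, εA ω, εB ω), by simp [h]⟩
      · rintro ⟨t, ht⟩
        by_cases h : f t.1 t.2.1 t.2.2 = true
        · simp only [h, if_true, Set.mem_setOf_eq] at ht
          rw [ht.1, ht.2.1, ht.2.2]; exact h
        · simp [h] at ht
    rw [hunion, measure_iUnion hdisj hmeas, tsum_fintype,
      ENNReal.toReal_sum (fun t _ => (measure_lt_top P _).ne)]
    apply Finset.sum_congr rfl
    intro t _
    by_cases h : f t.1 t.2.1 t.2.2 = true
    · simp only [hT, h, if_true]
      exact hjoint t.1 t.2.1 t.2.2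
    · simp [hT, h]
  -- compute the three probabilities
  have hAB : (P {ω | A ω = B ω}).toReal = η ^ 2 + (1 - η) ^ 2 := by
    have hset : {ω | A ω = B ω} = {ω | (εA ω == εB ω) = true} := by
      ext ω
      simp only [Set.mem_setOf_eq, hA, hB, beq_iff_eq]
      cases hz : Z ω <;> cases ha : εA ω <;> cases hb : εB ω <;> simp
    rw [hset, key (fun _ a b => a == b)]
    simp [Fintype.sum_prod_type, Fin.sum_univ_succ]
    ring
  set q : ℝ := π * (1 - η) + (1 - π) * η with hq
  have hAt : (P {ω | A ω = true}).toReal = q := by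
    have hset : {ω | A ω = true} = {ω | (fun z a (_ : Bool) => xor z a) (Z ω) (εA ω) (εB ω) = true} := by
      ext ω; simp [hA]
    rw [hset, key (fun z a _ => xor z a)]
    simp [Fintype.sum_prod_type]
    ring
  have hBt : (P {ω | B ω = true}).toReal = q := by
    have hset : {ω | B ω = true} = {ω | (fun z (_ : Bool) b => xor z b) (Z ω) (εA ω) (εB ω) = true} := by
      ext ω; simp [hB]
    rw [hset, key (fun z _ b => xor z b)]
    simp [Fintype.sum_prod_type]
    ring
  have hAf : (P {ω | A ω = false}).toReal = 1 - q := by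
    have hset : {ω | A ω = false} = {ω | (fun z a (_ : Bool) => !(xor z a)) (Z ω) (εA ω) (εB ω) = true} := by
      ext ω; simp [hA]
    rw [hset, key (fun z a _ => !(xor z a))]
    simp [Fintype.sum_prod_type]
    ring
  have hBf : (P {ω | B ω = false}).toReal = 1 - q := by
    have hset : {ω | B ω = false} = {ω | (fun z (_ : Bool) b => !(xor z b)) (Z ω) (εA ω) (εB ω) = true} := by
      ext ω; simp [hB]
    rw [hset, key (fun z _ b => !(xor z b))]
    simp [Fintype.sum_prod_type]
    ring
  rw [hAt, hBt, hAf, hBf] at hpe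
  rw [hAB] at hpo
  have hden : 1 - pe = 2 * (η * (1 - η) + (1 - 2 * η) ^ 2 * (π * (1 - π))) := by
    rw [hpe, hq]; ring
  have hnum : po - pe = 2 * ((1 - 2 * η) ^ 2 * (π * (1 - π))) := by
    rw [hpo, hpe, hq]; ring
  have hpos : 0 < η * (1 - η) + (1 - 2 * η) ^ 2 * (π * (1 - π)) := by
    have h1 : 0 ≤ η * (1 - η) := mul_nonneg hη0 (by linarith)
    have h2 : 0 < (1 - 2 * η) ^ 2 * (π * (1 - π)) := by
      apply mul_pos
      · exact pow_pos (by linarith) 2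
      · exact mul_pos hπpos (by linarith)
    linarith
  constructor
  · linarith [hden]
  · rw [hnum, hden, mul_div_mul_left _ _ (by norm_num : (2:ℝ) ≠ 0)]
end

section
/- (Core of Proposition 1: cross-rater κ bounds per-feature annotation noise.) Let κ* ∈ [0,1]. Under the symmetric equal-noise annotation model with latent prevalence π ∈ (0,1) and noise rate η ∈ [0, 1/2], if Cohen's κ between the two annotators satisfies κ ≥ κ*, then the per-annotator noise rate satisfies η ≤ (1 − √κ*)/2. This bound holds uniformly in the prevalence π. -/
open MeasureTheory

private lemma kappa_aux (s hh k d2 : ℝ) (hs : 0 < s) (hhn : 0 ≤ hh) (h4s : 4*s ≤ 1)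
    (hid : d2 = 1 - 4*hh) (hd2 : 0 ≤ d2) (hpos : 0 < hh + d2*s)
    (hineq : k * (2*(hh + d2*s)) ≤ 2*(d2*s)) : k ≤ d2 := by
  have B : d2*s ≤ d2*(hh + d2*s) := by
    nlinarith [mul_nonneg (mul_nonneg hhn hd2) (show (0:ℝ) ≤ 1 - 4*s by linarith)]
  by_contra hcon
  push_neg at hcon
  nlinarith [mul_lt_mul_of_pos_right hcon hpos]

set_option maxHeartbeats 1000000 in
/-- Core of Proposition 1: under the symmetric equal-noise annotation model with
`π ∈ (0,1)` and `η ∈ [0,1/2]`, if Cohen's `κ = (p_o - p_e)/(1 - p_e)` satisfies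
`κ ≥ κ*` for a threshold `κ* ∈ [0,1]`, then `η ≤ (1 - √κ*)/2`, uniformly in `π`.
(At `η = 1/2` one has `p_o = p_e = 1/2`, so `κ = 0` and the hypothesis forces
`κ* = 0`, matching the convention.) -/
theorem kappa_bounds_noise
    {Ω : Type*} [MeasurableSpace Ω] (P : Measure Ω) [IsProbabilityMeasure P]
    (π η : ℝ) (hπ0 : 0 ≤ π) (hπ1 : π ≤ 1) (hη0 : 0 ≤ η) (hη1 : η ≤ 1)
    (Z εA εB A B : Ω → Bool)
    (hZ : Measurable Z) (hεA : Measurable εA) (hεB : Measurable εB)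
    (hjoint : ∀ z a b : Bool,
      (P {ω | Z ω = z ∧ εA ω = a ∧ εB ω = b}).toReal =
        (cond z π (1 - π)) * (cond a η (1 - η)) * (cond b η (1 - η)))
    (hA : ∀ ω, A ω = xor (Z ω) (εA ω))
    (hB : ∀ ω, B ω = xor (Z ω) (εB ω))
    (hπpos : 0 < π) (hπlt : π < 1) (hηle : η ≤ 1 / 2)
    (κstar : ℝ) (hκs0 : 0 ≤ κstar) (hκs1 : κstar ≤ 1)
    (po pe κ : ℝ)
    (hpo : po = (P {ω | A ω = B ω}).toReal)
    (hpe : pe = (P {ω | A ω = true}).toReal * (P {ω | B ω = true}).toReal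
        + (P {ω | A ω = false}).toReal * (P {ω | B ω = false}).toReal)
    (hκ : κ = (po - pe) / (1 - pe))
    (hscreen : κstar ≤ κ) :
    η ≤ (1 - Real.sqrt κstar) / 2 := by
  have key : ∀ p : Bool → Bool → Bool → Bool,
      (P {ω | p (Z ω) (εA ω) (εB ω) = true}).toReal =
        ∑ t ∈ Finset.univ.filter (fun t : Bool × Bool × Bool => p t.1 t.2.1 t.2.2 = true),
          (cond t.1 π (1-π)) * (cond t.2.1 η (1-η)) * (cond t.2.2 η (1-η)) := by
    intro p
    have hset : {ω | p (Z ω) (εA ω) (εB ω) = true} =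
        ⋃ t ∈ Finset.univ.filter (fun t : Bool × Bool × Bool => p t.1 t.2.1 t.2.2 = true),
          {ω | Z ω = t.1 ∧ εA ω = t.2.1 ∧ εB ω = t.2.2} := by
      ext ω
      simp only [Set.mem_setOf_eq, Set.mem_iUnion, Finset.mem_coe, Finset.mem_filter,
        Finset.mem_univ, true_and]
      constructor
      · intro h; exact ⟨(Z ω, εA ω, εB ω), h, rfl, rfl, rfl⟩
      · rintro ⟨t, ht, h1, h2, h3⟩; rw [h1, h2, h3]; exact ht
    have hmeas : ∀ t : Bool × Bool × Bool,
        MeasurableSet {ω | Z ω = t.1 ∧ εA ω = t.2.1 ∧ εB ω = t.2.2} := by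
      intro t
      exact (hZ (MeasurableSet.singleton t.1)).inter
        ((hεA (MeasurableSet.singleton t.2.1)).inter (hεB (MeasurableSet.singleton t.2.2)))
    have hdisj : (↑(Finset.univ.filter
          (fun t : Bool × Bool × Bool => p t.1 t.2.1 t.2.2 = true)) : Set (Bool × Bool × Bool)).PairwiseDisjoint
        (fun t => {ω | Z ω = t.1 ∧ εA ω = t.2.1 ∧ εB ω = t.2.2}) := by
      intro s _ t _ hst
      refine Set.disjoint_left.2 ?_
      rintro ω ⟨h1, h2, h3⟩ ⟨h4, h5, h6⟩
      exact hst (by ext <;> simp_all)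
    rw [hset, measure_biUnion_finset hdisj (fun t _ => hmeas t),
      ENNReal.toReal_sum (fun t _ => measure_ne_top P _)]
    exact Finset.sum_congr rfl fun t _ => hjoint t.1 t.2.1 t.2.2
  -- p_o
  have e1 : {ω | A ω = B ω} = {ω | (fun z a b : Bool => a == b) (Z ω) (εA ω) (εB ω) = true} := by
    ext ω
    simp only [Set.mem_setOf_eq, hA, hB, beq_iff_eq]
    cases Z ω <;> cases εA ω <;> cases εB ω <;> simp
  have hpoval : po = η^2 + (1-η)^2 := by
    rw [hpo, e1, key (fun z a b : Bool => a == b)]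
    simp [Finset.sum_filter, Fintype.sum_prod_type]
    ring
  -- marginals
  have e2 : {ω | A ω = true} = {ω | (fun z a b : Bool => xor z a) (Z ω) (εA ω) (εB ω) = true} := by
    ext ω; simp [hA]
  have e3 : {ω | A ω = false} = {ω | (fun z a b : Bool => !(xor z a)) (Z ω) (εA ω) (εB ω) = true} := by
    ext ω; simp [hA]
  have e4 : {ω | B ω = true} = {ω | (fun z a b : Bool => xor z b) (Z ω) (εA ω) (εB ω) = true} := by
    ext ω; simp [hB]
  have e5 : {ω | B ω = false} = {ω | (fun z a b : Bool => !(xor z b)) (Z ω) (εA ω) (εB ω) = true} := by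
    ext ω; simp [hB]
  have hAt : (P {ω | A ω = true}).toReal = (1-π)*η + π*(1-η) := by
    rw [e2, key (fun z a b : Bool => xor z a)]
    simp [Finset.sum_filter, Fintype.sum_prod_type]; ring
  have hAf : (P {ω | A ω = false}).toReal = 1 - ((1-π)*η + π*(1-η)) := by
    rw [e3, key (fun z a b : Bool => !(xor z a))]
    simp [Finset.sum_filter, Fintype.sum_prod_type]; ring
  have hBt : (P {ω | B ω = true}).toReal = (1-π)*η + π*(1-η) := by
    rw [e4, key (fun z a b : Bool => xor z b)]
    simp [Finset.sum_filter, Fintype.sum_prod_type]; ring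
  have hBf : (P {ω | B ω = false}).toReal = 1 - ((1-π)*η + π*(1-η)) := by
    rw [e5, key (fun z a b : Bool => !(xor z b))]
    simp [Finset.sum_filter, Fintype.sum_prod_type]; ring
  have hpeval : pe = ((1-π)*η + π*(1-η))^2 + (1 - ((1-π)*η + π*(1-η)))^2 := by
    rw [hpe, hAt, hAf, hBt, hBf]; ring
  -- structural identities
  have h1 : 1 - pe = 2*(η*(1-η) + (1-2*η)^2*(π*(1-π))) := by rw [hpeval]; ring
  have h2 : po - pe = 2*((1-2*η)^2*(π*(1-π))) := by rw [hpoval, hpeval]; ring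
  have hden : 0 < 1 - pe := by
    rw [h1]
    rcases eq_or_lt_of_le hη0 with h | h
    · rw [← h]; norm_num
      nlinarith [mul_pos hπpos (by linarith : (0:ℝ) < 1-π)]
    · have hηη : 0 < η*(1-η) := mul_pos h (by linarith)
      nlinarith [mul_nonneg (sq_nonneg (1-2*η)) (mul_pos hπpos (by linarith : (0:ℝ) < 1-π)).le]
  have hineq : κstar * (1 - pe) ≤ po - pe := by
    rw [hκ, le_div_iff₀ hden] at hscreen
    linarith
  rw [h1, h2] at hineq
  have hkey : κstar ≤ (1-2*η)^2 := by
    refine kappa_aux (π*(1-π)) (η*(1-η)) κstar ((1-2*η)^2) ?_ ?_ ?_ (by ring) (sq_nonneg _) ?_ hineq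
    · exact mul_pos hπpos (by linarith)
    · nlinarith
    · nlinarith [sq_nonneg (1-2*π)]
    · rw [h1] at hden; linarith
  have hd : 0 ≤ 1 - 2*η := by linarith
  have hsq : Real.sqrt κstar ≤ 1 - 2*η := by
    calc Real.sqrt κstar ≤ Real.sqrt ((1-2*η)^2) := Real.sqrt_le_sqrt hkey
    _ = 1 - 2*η := Real.sqrt_sq hd
  linarith
end

section
/- (Tightness of the noise bound in Proposition 1.) Let κ* ∈ [0,1]. In the symmetric equal-noise annotation model with prevalence π = 1/2 and noise rate η = (1 − √κ*)/2, Cohen's κ between the two annotators equals exactly κ*. Hence the bound η ≤ (1 − √κ*)/2 implied by κ ≥ κ* is attained and cannot be improved uniformly in π. -/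
open MeasureTheory

/-- Tightness of the noise bound in Proposition 1: in the symmetric equal-noise model
with prevalence `π = 1/2` and noise rate `η = (1 - √κ*)/2` for `κ* ∈ [0,1]`, Cohen's
`κ = (p_o - p_e)/(1 - p_e)` equals exactly `κ*`. (When `κ* = 0`, `η = 1/2` and
`p_o = p_e = 1/2`, so the quotient is `0 = κ*`, matching the degenerate convention.) -/
theorem kappa_bound_tight
    {Ω : Type*} [MeasurableSpace Ω] (P : Measure Ω) [IsProbabilityMeasure P]
    (π η : ℝ) (hπ0 : 0 ≤ π) (hπ1 : π ≤ 1) (hη0 : 0 ≤ η) (hη1 : η ≤ 1)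
    (Z εA εB A B : Ω → Bool)
    (hZ : Measurable Z) (hεA : Measurable εA) (hεB : Measurable εB)
    (hjoint : ∀ z a b : Bool,
      (P {ω | Z ω = z ∧ εA ω = a ∧ εB ω = b}).toReal =
        (cond z π (1 - π)) * (cond a η (1 - η)) * (cond b η (1 - η)))
    (hA : ∀ ω, A ω = xor (Z ω) (εA ω))
    (hB : ∀ ω, B ω = xor (Z ω) (εB ω))
    (κstar : ℝ) (hκs0 : 0 ≤ κstar) (hκs1 : κstar ≤ 1)
    (hπhalf : π = 1 / 2) (hηval : η = (1 - Real.sqrt κstar) / 2)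
    (po pe κ : ℝ)
    (hpo : po = (P {ω | A ω = B ω}).toReal)
    (hpe : pe = (P {ω | A ω = true}).toReal * (P {ω | B ω = true}).toReal
        + (P {ω | A ω = false}).toReal * (P {ω | B ω = false}).toReal)
    (hκ : κ = (po - pe) / (1 - pe)) :
    κ = κstar := by
  have hmeasatom : ∀ p : Bool × Bool × Bool,
      MeasurableSet {ω | Z ω = p.1 ∧ εA ω = p.2.1 ∧ εB ω = p.2.2} := by
    rintro ⟨z, a, b⟩
    have : {ω | Z ω = z ∧ εA ω = a ∧ εB ω = b}
        = Z ⁻¹' {z} ∩ (εA ⁻¹' {a} ∩ εB ⁻¹' {b}) := by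
      ext ω; simp
    rw [this]
    exact (hZ (measurableSet_singleton z)).inter
      ((hεA (measurableSet_singleton a)).inter (hεB (measurableSet_singleton b)))
  have key : ∀ q : Bool × Bool × Bool → Bool,
      (P {ω | q (Z ω, εA ω, εB ω) = true}).toReal
        = ∑ p ∈ Finset.univ.filter (fun p => q p = true),
            (P {ω | Z ω = p.1 ∧ εA ω = p.2.1 ∧ εB ω = p.2.2}).toReal := by
    intro q
    have hset : {ω | q (Z ω, εA ω, εB ω) = true}
        = ⋃ p ∈ Finset.univ.filter (fun p => q p = true),
            {ω | Z ω = p.1 ∧ εA ω = p.2.1 ∧ εB ω = p.2.2} := by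
      ext ω
      simp only [Set.mem_setOf_eq, Set.mem_iUnion, Finset.mem_filter,
        Finset.mem_univ, true_and]
      constructor
      · intro h; exact ⟨(Z ω, εA ω, εB ω), h, rfl, rfl, rfl⟩
      · rintro ⟨⟨z, a, b⟩, hq, h1, h2, h3⟩
        subst h1; subst h2; subst h3; exact hq
    rw [hset, measure_biUnion_finset, ENNReal.toReal_sum]
    · intro p _; exact measure_ne_top P _
    · intro p _ p' _ hne
      simp only [Function.onFun]
      rw [Set.disjoint_left]
      rintro ω ⟨h1, h2, h3⟩ ⟨h1', h2', h3'⟩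
      exact hne (by
        obtain ⟨z, a, b⟩ := p; obtain ⟨z', a', b'⟩ := p'
        simp_all)
    · intro p _; exact hmeasatom p
  have eAB : {ω | A ω = B ω}
      = {ω | (fun p : Bool × Bool × Bool => p.2.1 == p.2.2) (Z ω, εA ω, εB ω) = true} := by
    ext ω
    simp only [Set.mem_setOf_eq, hA, hB]
    cases Z ω <;> cases εA ω <;> cases εB ω <;> decide
  have eAt : {ω | A ω = true}
      = {ω | (fun p : Bool × Bool × Bool => xor p.1 p.2.1) (Z ω, εA ω, εB ω) = true} := by
    ext ω; simp [hA]
  have eAf : {ω | A ω = false}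
      = {ω | (fun p : Bool × Bool × Bool => !(xor p.1 p.2.1)) (Z ω, εA ω, εB ω) = true} := by
    ext ω; simp [hA]
  have eBt : {ω | B ω = true}
      = {ω | (fun p : Bool × Bool × Bool => xor p.1 p.2.2) (Z ω, εA ω, εB ω) = true} := by
    ext ω; simp [hB]
  have eBf : {ω | B ω = false}
      = {ω | (fun p : Bool × Bool × Bool => !(xor p.1 p.2.2)) (Z ω, εA ω, εB ω) = true} := by
    ext ω; simp [hB]
  have hpo' : po = η * η + (1 - η) * (1 - η) := by
    rw [hpo, eAB, key (fun p : Bool × Bool × Bool => p.2.1 == p.2.2)]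
    simp only [Finset.sum_filter, Fintype.sum_prod_type, Fintype.sum_bool, hjoint]
    norm_num [hπhalf]
    ring
  have hAt : (P {ω | A ω = true}).toReal = 1 / 2 := by
    rw [eAt, key (fun p : Bool × Bool × Bool => xor p.1 p.2.1)]
    simp only [Finset.sum_filter, Fintype.sum_prod_type, Fintype.sum_bool, hjoint]
    norm_num [hπhalf]
    ring
  have hAf : (P {ω | A ω = false}).toReal = 1 / 2 := by
    rw [eAf, key (fun p : Bool × Bool × Bool => !(xor p.1 p.2.1))]
    simp only [Finset.sum_filter, Fintype.sum_prod_type, Fintype.sum_bool, hjoint]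
    norm_num [hπhalf]
    ring
  have hBt : (P {ω | B ω = true}).toReal = 1 / 2 := by
    rw [eBt, key (fun p : Bool × Bool × Bool => xor p.1 p.2.2)]
    simp only [Finset.sum_filter, Fintype.sum_prod_type, Fintype.sum_bool, hjoint]
    norm_num [hπhalf]
    ring
  have hBf : (P {ω | B ω = false}).toReal = 1 / 2 := by
    rw [eBf, key (fun p : Bool × Bool × Bool => !(xor p.1 p.2.2))]
    simp only [Finset.sum_filter, Fintype.sum_prod_type, Fintype.sum_bool, hjoint]
    norm_num [hπhalf]
    ring
  have hpe' : pe = 1 / 2 := by rw [hpe, hAt, hAf, hBt, hBf]; norm_num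
  have hs2 : Real.sqrt κstar ^ 2 = κstar := Real.sq_sqrt hκs0
  rw [hκ, hpo', hpe', hηval]
  linear_combination hs2
end

section
/- (Equivalent form of the κ-to-noise implication.) For all η ∈ [0, 1/2] and π ∈ (0,1), letting κ(η, π) = (1 − 2η)² π(1 − π) / ( η(1 − η) + (1 − 2η)² π(1 − π) ) (with κ interpreted as 0 when η = 1/2), one has κ(η, π) ≤ (1 − 2η)², and therefore 1 − 2η ≥ √(κ(η, π)), i.e., η ≤ (1 − √(κ(η, π)))/2. Thus the realized cross-rater κ itself certifies the per-annotator noise bound η ≤ (1 − √κ)/2. -/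
/-- Equivalent form of the κ-to-noise implication: for all `η ∈ [0,1/2]` and `π ∈ (0,1)`,
the closed-form `κ(η,π) = (1-2η)² π(1-π) / (η(1-η) + (1-2η)² π(1-π))` (which is literally
`0` when `η = 1/2`) satisfies `κ ≤ (1-2η)²`, hence `√κ ≤ 1 - 2η`, i.e.
`η ≤ (1 - √κ)/2`: the realized cross-rater κ certifies the per-annotator noise bound. -/
theorem realized_kappa_certifies_noise (η π : ℝ)
    (hη0 : 0 ≤ η) (hη1 : η ≤ 1 / 2) (hπ0 : 0 < π) (hπ1 : π < 1)
    (κ : ℝ)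
    (hκ : κ = (1 - 2 * η) ^ 2 * (π * (1 - π)) /
        (η * (1 - η) + (1 - 2 * η) ^ 2 * (π * (1 - π)))) :
    κ ≤ (1 - 2 * η) ^ 2 ∧
    Real.sqrt κ ≤ 1 - 2 * η ∧
    η ≤ (1 - Real.sqrt κ) / 2 := by
  have hb : 0 < π * (1 - π) := by nlinarith
  have hb4 : π * (1 - π) ≤ 1 / 4 := by nlinarith [sq_nonneg (π - 1/2)]
  have hD : 0 < η * (1 - η) + (1 - 2 * η) ^ 2 * (π * (1 - π)) := by nlinarith [mul_nonneg (mul_nonneg hη0 (by linarith : (0:ℝ) ≤ 1 - η)) (by linarith : (0:ℝ) ≤ 1 - 4 * (π * (1 - π)))]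
  have h1 : κ ≤ (1 - 2 * η) ^ 2 := by
    rw [hκ, div_le_iff₀ hD]
    nlinarith [sq_nonneg (1 - 2 * η), mul_nonneg (mul_nonneg hη0 (by linarith : (0:ℝ) ≤ 1 - η)) (by linarith : (0:ℝ) ≤ 1 - 4 * (π * (1 - π))), sq_nonneg ((1 - 2 * η) * (1 - 2 * η))]
  have h2 : Real.sqrt κ ≤ 1 - 2 * η := by
    calc Real.sqrt κ ≤ Real.sqrt ((1 - 2 * η) ^ 2) := Real.sqrt_le_sqrt h1
    _ = 1 - 2 * η := by rw [Real.sqrt_sq (by linarith)]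
  exact ⟨h1, h2, by linarith⟩
end
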